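/- Let d be symmetric nonnegative with the α-relaxed triangle inequality (α ≥ 1), f monotone submodular nonnegative, λ ≥ 0, and define φ(X) = f(X) + λ·d(X) where d(X) sums d over unordered pairs of X. Suppose S and O are finite sets of equal cardinality at least 3, with B = S \ O = {b_1,…,b_t}, C = O \ S = {c_1,…,c_t}, t ≥ 2 (when t = 2 assume S ∩ O ≠ ∅), and suppose φ(S) ≥ φ((S \ {b_i}) ∪ {c_i}) for every i. Then φ(S) ≥ (1/(2α²))·φ(O). -/

import Mathlib

/-!
Submodularity telescopes the marginal gains of adding `O \ S` to `S` and of removing `S \ O`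
from `S`, and the exchange inequality `f (S + c) - f S ≤ f (S - b + c) - f (S - b)` turns them
into the gains of the swaps `Sᵢ = S - bᵢ + cᵢ`: `f O ≤ 2 f S + ∑ᵢ (f Sᵢ - f S)`.
Dually `d O + α² ∑ᵢ (d S - d Sᵢ) ≤ 2 α² d S`: splitting `S` and `O` along `S ∩ O`, this reduces
to bounding `d (O \ S)` by the off-diagonal distances between `S \ O` and `O \ S`. For `t ≥ 3`
this follows by averaging `d(cᵢ, cⱼ) ≤ α (d(cᵢ, bₖ) + d(bₖ, cⱼ))` over the `t - 2` indices
`k ∉ {i, j}`; for `t = 2` one routes through a point of `S ∩ O` instead, at the cost of `α²`.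
Local optimality bounds `f Sᵢ - f S` by `λ (d S - d Sᵢ)`, and `α²` times the first inequality
plus `λ` times the second gives `φ O ≤ 2 α² φ S`.
-/

open Finset

noncomputable def dSet {U : Type*} (d : U → U → ℝ) (X : Finset U) : ℝ :=
  (∑ u ∈ X, ∑ v ∈ X, d u v) / 2

noncomputable def dCross {U : Type*} (d : U → U → ℝ) (X Y : Finset U) : ℝ :=
  ∑ u ∈ X, ∑ v ∈ Y, d u v

section Submodular

variable {U : Type*} [DecidableEq U] {f : Finset U → ℝ}

theorem submodular_union_sub_le_sum (hsub : ∀ X Y, f (X ∪ Y) + f (X ∩ Y) ≤ f X + f Y)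
    (S T : Finset U) : f (S ∪ T) - f S ≤ ∑ x ∈ T, (f (insert x S) - f S) := by
  induction T using Finset.induction_on with
  | empty => simp
  | @insert a T ha ih =>
    have hunion : insert a S ∪ (S ∪ T) = S ∪ insert a T := by
      ext; simp only [mem_union, mem_insert]; tauto
    have hinter : insert a S ∩ (S ∪ T) = S := by
      ext x; simp only [mem_inter, mem_insert, mem_union]; aesop
    have := hsub (insert a S) (S ∪ T)
    rw [hunion, hinter] at this
    rw [sum_insert ha]
    linarith

theorem submodular_comp_sdiff (hsub : ∀ X Y, f (X ∪ Y) + f (X ∩ Y) ≤ f X + f Y) (S : Finset U) :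
    ∀ X Y, f (S \ (X ∪ Y)) + f (S \ (X ∩ Y)) ≤ f (S \ X) + f (S \ Y) := by
  intro X Y
  rw [sdiff_union_distrib, sdiff_inter_distrib_right, add_comm]
  exact hsub _ _

theorem submodular_sum_sub_erase_le (hsub : ∀ X Y, f (X ∪ Y) + f (X ∩ Y) ≤ f X + f Y)
    (S T : Finset U) : ∑ x ∈ T, (f S - f (S.erase x)) ≤ f S - f (S \ T) := by
  have := submodular_union_sub_le_sum (f := fun X => f (S \ X)) (submodular_comp_sdiff hsub S) ∅ T
  simp only [empty_union, sdiff_empty, insert_empty, sdiff_singleton_eq_erase] at this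
  simp only [sum_sub_distrib, sum_const, nsmul_eq_mul] at this ⊢
  linarith

theorem submodular_insert_sub_le_swap (hsub : ∀ X Y, f (X ∪ Y) + f (X ∩ Y) ≤ f X + f Y)
    {S : Finset U} {y : U} (x : U) (hy : y ∉ S) :
    f (insert y S) - f S ≤ f (insert y (S.erase x)) - f (S.erase x) := by
  have hunion : insert y (S.erase x) ∪ S = insert y S := by
    rw [insert_union, union_eq_right.mpr (erase_subset x S)]
  have hinter : insert y (S.erase x) ∩ S = S.erase x := by
    rw [insert_inter_of_notMem hy, inter_eq_left.mpr (erase_subset x S)]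
  have := hsub (insert y (S.erase x)) S
  rw [hunion, hinter] at this
  linarith

end Submodular

section Dispersion

variable {U : Type*} {d : U → U → ℝ}

theorem dCross_nonneg (hnn : ∀ u v, 0 ≤ d u v) (X Y : Finset U) : 0 ≤ dCross d X Y :=
  sum_nonneg fun _ _ => sum_nonneg fun _ _ => hnn _ _

theorem dSet_nonneg (hnn : ∀ u v, 0 ≤ d u v) (X : Finset U) : 0 ≤ dSet d X :=
  div_nonneg (dCross_nonneg hnn X X) zero_le_two

theorem dCross_comm (hsymm : ∀ u v, d u v = d v u) (X Y : Finset U) :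
    dCross d X Y = dCross d Y X := by
  unfold dCross
  rw [sum_comm]
  simp only [hsymm]

variable [DecidableEq U]

theorem dCross_union_left {X Y : Finset U} (h : Disjoint X Y) (Z : Finset U) :
    dCross d (X ∪ Y) Z = dCross d X Z + dCross d Y Z :=
  sum_union h

theorem dCross_union_right (X : Finset U) {Y Z : Finset U} (h : Disjoint Y Z) :
    dCross d X (Y ∪ Z) = dCross d X Y + dCross d X Z := by
  unfold dCross
  rw [← sum_add_distrib]
  exact sum_congr rfl fun _ _ => sum_union h

theorem dSet_union (hsymm : ∀ u v, d u v = d v u) {X Y : Finset U} (h : Disjoint X Y) :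
    dSet d (X ∪ Y) = dSet d X + dSet d Y + dCross d X Y := by
  have hX : dSet d X = dCross d X X / 2 := rfl
  have hY : dSet d Y = dCross d Y Y / 2 := rfl
  rw [dSet, ← dCross, dCross_union_left h, dCross_union_right _ h, dCross_union_right _ h,
    dCross_comm hsymm Y X, hX, hY]
  ring

theorem dSet_insert (hsymm : ∀ u v, d u v = d v u) (hself : ∀ u, d u u = 0)
    {a : U} {X : Finset U} (ha : a ∉ X) :
    dSet d (insert a X) = dSet d X + ∑ v ∈ X, d a v := by
  rw [insert_eq, dSet_union hsymm (disjoint_singleton_left.mpr ha)]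
  simp [dSet, dCross, hself]

theorem dSet_sub_dSet_swap (hsymm : ∀ u v, d u v = d v u) (hself : ∀ u, d u u = 0)
    {S : Finset U} {x y : U} (hx : x ∈ S) (hy : y ∉ S) :
    dSet d S - dSet d (insert y (S.erase x)) = ∑ v ∈ S, d x v - ∑ v ∈ S, d y v + d y x := by
  have hS := dSet_insert hsymm hself (notMem_erase x S)
  rw [insert_erase hx, sum_erase _ (hself x)] at hS
  rw [hS, dSet_insert hsymm hself (fun h => hy (mem_of_mem_erase h)), sum_erase_eq_sub hx]
  ring

end Dispersion

section Pairing

variable {ι : Type*} [Fintype ι] [DecidableEq ι]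

theorem sum_erase_comm (F : ι → ι → ℝ) :
    ∑ i, ∑ j ∈ univ.erase i, F i j = ∑ j, ∑ i ∈ univ.erase j, F i j :=
  sum_comm' fun i j => by simp [eq_comm]

theorem cast_card_univ_sdiff_pair {i j : ι} (hij : i ≠ j) :
    ((univ \ {i, j} : Finset ι).card : ℝ) = Fintype.card ι - 2 := by
  have h2 : 2 ≤ Fintype.card ι := (card_pair hij).symm.le.trans (card_le_univ _)
  rw [card_sdiff_of_subset (subset_univ _), card_univ, card_pair hij, Nat.cast_sub h2]
  norm_num

theorem sum_sum_erase_sum_sdiff_pair (g : ι → ι → ℝ) :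
    ∑ i, ∑ j ∈ univ.erase i, ∑ k ∈ univ \ {i, j}, g j k
      = (Fintype.card ι - 2) * ∑ j, ∑ k ∈ univ.erase j, g j k := by
  rw [sum_erase_comm, mul_sum]
  refine sum_congr rfl fun j _ => ?_
  rw [sum_comm' (t' := univ.erase j) (s' := fun k => univ \ {j, k}) fun i k => by
    simp only [mem_erase, mem_sdiff, mem_insert, mem_singleton, mem_univ]; tauto, mul_sum]
  refine sum_congr rfl fun k hk => ?_
  rw [sum_const, nsmul_eq_mul, cast_card_univ_sdiff_pair (ne_of_mem_erase hk).symm]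

variable {U : Type*} {d : U → U → ℝ} {α : ℝ}

theorem sum_sum_le_of_three_le_card (h3 : 3 ≤ Fintype.card ι) (hsymm : ∀ u v, d u v = d v u)
    (hself : ∀ u, d u u = 0) (htri : ∀ u v w, d u v ≤ α * (d v w + d w u)) (x y : ι → U) :
    ∑ i, ∑ j, d (y i) (y j) ≤ 2 * α * ∑ i, ∑ j ∈ univ.erase i, d (x i) (y j) := by
  have hpos : (0 : ℝ) < Fintype.card ι - 2 := by
    have : (3 : ℝ) ≤ Fintype.card ι := by exact_mod_cast h3
    linarith
  have hdiag : ∀ i, ∑ j, d (y i) (y j) = ∑ j ∈ univ.erase i, d (y i) (y j) := fun i =>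
    (sum_erase (f := fun j => d (y i) (y j)) univ (hself (y i))).symm
  have havg : ∀ i j, i ≠ j → (Fintype.card ι - 2) * d (y i) (y j)
      ≤ α * ∑ k ∈ univ \ {i, j}, (d (x k) (y j) + d (x k) (y i)) := fun i j hij => by
    rw [← cast_card_univ_sdiff_pair hij, ← nsmul_eq_mul, ← sum_const, mul_sum]
    refine sum_le_sum fun k _ => ?_
    rw [hsymm (x k) (y j)]
    exact htri _ _ _
  have hswap : ∑ i, ∑ j ∈ univ.erase i, ∑ k ∈ univ \ {i, j}, d (x k) (y i)
      = ∑ i, ∑ j ∈ univ.erase i, ∑ k ∈ univ \ {i, j}, d (x k) (y j) := by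
    rw [sum_erase_comm]
    simp only [pair_comm]
  have hoff : ∑ j, ∑ k ∈ univ.erase j, d (x k) (y j)
      = ∑ i, ∑ j ∈ univ.erase i, d (x i) (y j) := (sum_erase_comm _).symm
  refine le_of_mul_le_mul_left ?_ hpos
  calc (Fintype.card ι - 2) * ∑ i, ∑ j, d (y i) (y j)
      = ∑ i, ∑ j ∈ univ.erase i, (Fintype.card ι - 2) * d (y i) (y j) := by
        simp only [hdiag, mul_sum]
    _ ≤ ∑ i, ∑ j ∈ univ.erase i, α * ∑ k ∈ univ \ {i, j}, (d (x k) (y j) + d (x k) (y i)) :=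
        sum_le_sum fun i _ => sum_le_sum fun j hj => havg i j (ne_of_mem_erase hj).symm
    _ = 2 * α * ∑ i, ∑ j ∈ univ.erase i, ∑ k ∈ univ \ {i, j}, d (x k) (y j) := by
        simp only [← mul_sum, sum_add_distrib, hswap]
        ring
    _ = (Fintype.card ι - 2) * (2 * α * ∑ i, ∑ j ∈ univ.erase i, d (x i) (y j)) := by
        rw [sum_sum_erase_sum_sdiff_pair (fun j k => d (x k) (y j)), hoff]
        ring

theorem sum_sum_le_of_card_eq_two (h2 : Fintype.card ι = 2) (hα : 0 ≤ α)
    (hsymm : ∀ u v, d u v = d v u) (hself : ∀ u, d u u = 0)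
    (htri : ∀ u v w, d u v ≤ α * (d v w + d w u)) (x y : ι → U) (s : U) :
    ∑ i, ∑ j, d (y i) (y j)
      ≤ 2 * α ^ 2 * (∑ i, ∑ j ∈ univ.erase i, d (x i) (y j) + ∑ i, d (x i) s) := by
  obtain ⟨i, j, hij, huniv⟩ := card_eq_two.mp (card_univ.trans h2)
  have hvia_s : d (y i) (y j) ≤ α ^ 2 * (d (x i) (y j) + d (x j) (y i) + d (x i) s + d (x j) s) :=
    calc d (y i) (y j) ≤ α * (d (y j) s + d s (y i)) := htri _ _ _
      _ ≤ α * (α * (d s (x i) + d (x i) (y j)) + α * (d (y i) (x j) + d (x j) s)) := by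
        gcongr <;> exact htri _ _ _
      _ = α ^ 2 * (d (x i) (y j) + d (x j) (y i) + d (x i) s + d (x j) s) := by
        rw [hsymm s, hsymm (y i)]; ring
  simp only [huniv, sum_pair hij, hself, zero_add, hsymm (y j) (y i), add_zero,
    erase_insert_eq_erase, mem_singleton, hij, not_false_eq_true, erase_eq_of_notMem,
    sum_singleton, mem_insert, hij.symm, or_true, sum_erase_eq_sub, add_sub_cancel_right]
  linarith

theorem sum_sum_le_pairing (hα : 1 ≤ α) (hnn : ∀ u v, 0 ≤ d u v) (hsymm : ∀ u v, d u v = d v u)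
    (hself : ∀ u, d u u = 0) (htri : ∀ u v w, d u v ≤ α * (d v w + d w u)) (x y : ι → U)
    (J : Finset U) (hJ : Fintype.card ι = 2 → J.Nonempty) :
    (∑ i, ∑ j, d (y i) (y j)) / 2
      ≤ α ^ 2 * (∑ i, ∑ j ∈ univ.erase i, d (x i) (y j) + ∑ i, ∑ v ∈ J, d (x i) v) := by
  have hoff : 0 ≤ ∑ i, ∑ j ∈ univ.erase i, d (x i) (y j) :=
    sum_nonneg fun _ _ => sum_nonneg fun _ _ => hnn _ _
  have hJnn : 0 ≤ ∑ i, ∑ v ∈ J, d (x i) v := sum_nonneg fun _ _ => sum_nonneg fun _ _ => hnn _ _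
  rcases lt_trichotomy (Fintype.card ι) 2 with hlt | h2 | h3
  · have : Subsingleton ι := Fintype.card_le_one_iff_subsingleton.mp (by omega)
    have hzero : ∑ i, ∑ j, d (y i) (y j) = 0 :=
      sum_eq_zero fun i _ => sum_eq_zero fun j _ => Subsingleton.elim i j ▸ hself (y i)
    rw [hzero, zero_div]
    positivity
  · obtain ⟨s, hs⟩ := hJ h2
    have hs_le : ∑ i, d (x i) s ≤ ∑ i, ∑ v ∈ J, d (x i) v :=
      sum_le_sum fun i _ => single_le_sum (fun v _ => hnn (x i) v) hs
    have := sum_sum_le_of_card_eq_two h2 (by linarith) hsymm hself htri x y s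
    nlinarith
  · have := sum_sum_le_of_three_le_card h3 hsymm hself htri x y
    have hαα : α * ∑ i, ∑ j ∈ univ.erase i, d (x i) (y j)
        ≤ α ^ 2 * ∑ i, ∑ j ∈ univ.erase i, d (x i) (y j) := by gcongr; nlinarith
    nlinarith

end Pairing

section Swaps

variable {ι : Type*} [Fintype ι] {U : Type*} [DecidableEq U]

theorem submodular_add_le_two_mul_add_sum_swap {f : Finset U → ℝ}
    (hmono : ∀ X Y, X ⊆ Y → f X ≤ f Y) (hsub : ∀ X Y, f (X ∪ Y) + f (X ∩ Y) ≤ f X + f Y)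
    {S O : Finset U} {b c : ι → U} (hb : Function.Injective b) (hc : Function.Injective c)
    (hB : univ.image b = S \ O) (hC : univ.image c = O \ S) :
    f O + f (S ∩ O) ≤ 2 * f S + ∑ i, (f (insert (c i) (S.erase (b i))) - f S) := by
  have hcS : ∀ i, c i ∉ S := fun i => (mem_sdiff.mp (hC ▸ mem_image_of_mem c (mem_univ i))).2
  have hadd := submodular_union_sub_le_sum hsub S (O \ S)
  rw [union_sdiff_self_eq_union, ← hC, sum_image fun _ _ _ _ h => hc h] at hadd
  have hremove := submodular_sum_sub_erase_le hsub S (S \ O)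
  rw [sdiff_sdiff_self_left, ← hB, sum_image fun _ _ _ _ h => hb h] at hremove
  have hexchange : ∑ i, (f (insert (c i) S) - f S)
      ≤ ∑ i, (f (insert (c i) (S.erase (b i))) - f S) + ∑ i, (f S - f (S.erase (b i))) := by
    rw [← sum_add_distrib]
    exact sum_le_sum fun i _ => by
      linarith [submodular_insert_sub_le_swap hsub (b i) (hcS i)]
  linarith [hmono O (S ∪ O) subset_union_right]

theorem dCross_image_left {d : U → U → ℝ} {b : ι → U} (hb : Function.Injective b)
    (Y : Finset U) : dCross d (univ.image b) Y = ∑ i, ∑ v ∈ Y, d (b i) v :=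
  sum_image fun _ _ _ _ h => hb h

theorem dSet_image {d : U → U → ℝ} {c : ι → U} (hc : Function.Injective c) :
    dSet d (univ.image c) = (∑ i, ∑ j, d (c i) (c j)) / 2 := by
  rw [dSet, sum_image fun _ _ _ _ h => hc h]
  simp only [sum_image fun _ _ _ _ h => hc h]

variable [DecidableEq ι]

theorem dSet_image_add_sum_le_pairing {d : U → U → ℝ} {α : ℝ} (hα : 1 ≤ α)
    (hnn : ∀ u v, 0 ≤ d u v) (hsymm : ∀ u v, d u v = d v u) (hself : ∀ u, d u u = 0)
    (htri : ∀ u v w, d u v ≤ α * (d v w + d w u)) {b c : ι → U}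
    (hb : Function.Injective b) (hc : Function.Injective c)
    (J : Finset U) (hJ : Fintype.card ι = 2 → J.Nonempty) :
    dSet d (univ.image c) + α ^ 2 * ∑ i, d (b i) (c i)
      ≤ α ^ 2 * (dCross d (univ.image b) (univ.image c) + dCross d (univ.image b) J) := by
  have hoff : ∑ i, ∑ j ∈ univ.erase i, d (b i) (c j)
      = dCross d (univ.image b) (univ.image c) - ∑ i, d (b i) (c i) := by
    rw [dCross_image_left hb, ← sum_sub_distrib]
    refine sum_congr rfl fun i _ => ?_
    rw [sum_image fun _ _ _ _ h => hc h, sum_erase_eq_sub (mem_univ i)]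
  have := sum_sum_le_pairing hα hnn hsymm hself htri b c J hJ
  rw [hoff, ← dCross_image_left hb J, ← dSet_image hc] at this
  linarith

theorem dSet_add_sq_mul_sum_swap_le {d : U → U → ℝ} {α : ℝ} (hα : 1 ≤ α)
    (hnn : ∀ u v, 0 ≤ d u v) (hsymm : ∀ u v, d u v = d v u) (hself : ∀ u, d u u = 0)
    (htri : ∀ u v w, d u v ≤ α * (d v w + d w u)) {S O : Finset U} {b c : ι → U}
    (hb : Function.Injective b) (hc : Function.Injective c)
    (hB : univ.image b = S \ O) (hC : univ.image c = O \ S)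
    (hJ : Fintype.card ι = 2 → (S ∩ O).Nonempty) :
    dSet d O + α ^ 2 * ∑ i, (dSet d S - dSet d (insert (c i) (S.erase (b i))))
      ≤ 2 * α ^ 2 * dSet d S := by
  have hbS : ∀ i, b i ∈ S := fun i => (mem_sdiff.mp (hB ▸ mem_image_of_mem b (mem_univ i))).1
  have hcS : ∀ i, c i ∉ S := fun i => (mem_sdiff.mp (hC ▸ mem_image_of_mem c (mem_univ i))).2
  have hgain : ∑ i, (dSet d S - dSet d (insert (c i) (S.erase (b i))))
      = dCross d (S \ O) S - dCross d (O \ S) S + ∑ i, d (b i) (c i) := by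
    rw [← hB, ← hC, dCross_image_left hb, dCross_image_left hc, ← sum_sub_distrib,
      ← sum_add_distrib]
    refine sum_congr rfl fun i _ => ?_
    rw [dSet_sub_dSet_swap hsymm hself (hbS i) (hcS i), hsymm (c i)]
  have hBJ : Disjoint (S \ O) (S ∩ O) := disjoint_sdiff_inter S O
  have hCJ : Disjoint (O \ S) (S ∩ O) := inter_comm O S ▸ disjoint_sdiff_inter O S
  have hS : dSet d S = dSet d (S \ O) + dSet d (S ∩ O) + dCross d (S \ O) (S ∩ O) := by
    rw [← dSet_union hsymm hBJ, sdiff_union_inter]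
  have hO : dSet d O = dSet d (O \ S) + dSet d (S ∩ O) + dCross d (O \ S) (S ∩ O) := by
    rw [← dSet_union hsymm hCJ, inter_comm, sdiff_union_inter]
  have hBS : dCross d (S \ O) S = 2 * dSet d (S \ O) + dCross d (S \ O) (S ∩ O) := by
    have h := dCross_union_right (d := d) (S \ O) hBJ
    rw [sdiff_union_inter] at h
    rw [h, dSet, dCross]
    ring
  have hCS : dCross d (O \ S) S = dCross d (S \ O) (O \ S) + dCross d (O \ S) (S ∩ O) := by
    have h := dCross_union_right (d := d) (O \ S) hBJ
    rw [sdiff_union_inter] at h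
    rw [h, dCross_comm hsymm (O \ S)]
  have hpair := dSet_image_add_sum_le_pairing hα hnn hsymm hself htri hb hc (S ∩ O) hJ
  rw [hB, hC] at hpair
  have hJnn := mul_nonneg (by nlinarith : (0 : ℝ) ≤ 2 * α ^ 2 - 1) (dSet_nonneg hnn (S ∩ O))
  have hCJnn := mul_nonneg (by nlinarith : (0 : ℝ) ≤ α ^ 2 - 1) (dCross_nonneg hnn (O \ S) (S ∩ O))
  rw [hgain, hS, hO, hBS, hCS]
  nlinarith

end Swaps

theorem stmt8_general {U : Type*} [DecidableEq U] (d : U → U → ℝ) (α : ℝ) (hα : 1 ≤ α)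
    (hnn : ∀ u v, 0 ≤ d u v) (hsymm : ∀ u v, d u v = d v u)
    (hself : ∀ u, d u u = 0)
    (htri : ∀ u v w, d u v ≤ α * (d v w + d w u))
    (f : Finset U → ℝ) (hfnn : ∀ X, 0 ≤ f X)
    (hmono : ∀ X Y, X ⊆ Y → f X ≤ f Y)
    (hsub : ∀ X Y, f (X ∪ Y) + f (X ∩ Y) ≤ f X + f Y)
    (lam : ℝ) (hlam : 0 ≤ lam)
    (S O : Finset U)
    (t : ℕ) (ht2 : t = 2 → (S ∩ O).Nonempty)
    (b c : Fin t → U)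
    (hb : Function.Injective b) (hc : Function.Injective c)
    (hB : Finset.image b Finset.univ = S \ O)
    (hC : Finset.image c Finset.univ = O \ S)
    (hlocal : ∀ i, f S + lam * dSet d S
      ≥ f (insert (c i) (S.erase (b i))) + lam * dSet d (insert (c i) (S.erase (b i)))) :
    f S + lam * dSet d S ≥ (1 / (2 * α ^ 2)) * (f O + lam * dSet d O) := by
  have hf := submodular_add_le_two_mul_add_sum_swap hmono hsub hb hc hB hC
  have hd := dSet_add_sq_mul_sum_swap_le hα hnn hsymm hself htri hb hc hB hC
    (by rwa [Fintype.card_fin])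
  have hgain : ∑ i, (f (insert (c i) (S.erase (b i))) - f S)
      ≤ lam * ∑ i, (dSet d S - dSet d (insert (c i) (S.erase (b i)))) := by
    rw [mul_sum]
    exact sum_le_sum fun i _ => by linarith [hlocal i]
  have hfO : f O ≤ α ^ 2 * f O := le_mul_of_one_le_left (hfnn O) (by nlinarith)
  rw [ge_iff_le, one_div, inv_mul_le_iff₀ (by positivity)]
  nlinarith [hfnn (S ∩ O), mul_le_mul_of_nonneg_left hd hlam]

theorem stmt8 {U : Type*} [DecidableEq U] (d : U → U → ℝ) (α : ℝ) (hα : 1 ≤ α)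
    (hnn : ∀ u v, 0 ≤ d u v) (hsymm : ∀ u v, d u v = d v u)
    (hself : ∀ u, d u u = 0)
    (htri : ∀ u v w, d u v ≤ α * (d v w + d w u))
    (f : Finset U → ℝ) (hfnn : ∀ X, 0 ≤ f X)
    (hmono : ∀ X Y, X ⊆ Y → f X ≤ f Y)
    (hsub : ∀ X Y, f (X ∪ Y) + f (X ∩ Y) ≤ f X + f Y)
    (lam : ℝ) (hlam : 0 ≤ lam)
    (S O : Finset U) (hcard : S.card = O.card) (hcard3 : 3 ≤ S.card)
    (t : ℕ) (ht : 2 ≤ t) (ht2 : t = 2 → (S ∩ O).Nonempty)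
    (b c : Fin t → U)
    (hb : Function.Injective b) (hc : Function.Injective c)
    (hB : Finset.image b Finset.univ = S \ O)
    (hC : Finset.image c Finset.univ = O \ S)
    (hlocal : ∀ i, f S + lam * dSet d S
      ≥ f (insert (c i) (S.erase (b i))) + lam * dSet d (insert (c i) (S.erase (b i)))) :
    f S + lam * dSet d S ≥ (1 / (2 * α ^ 2)) * (f O + lam * dSet d O) :=
  stmt8_general d α hα hnn hsymm hself htri f hfnn hmono hsub lam hlam S O t ht2 b c hb hc hB hC
    hlocal
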